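/- Let d ≥ 3, let e₁ = (1,0,…,0) ∈ ℝ^d, c_n = 2ⁿ e₁, C_n = Q(c_n, 1/(2n)); for τ > 3 let d_n = c_n + (τ/n) e₁, D_n = Q(d_n, 1/(2n)), and S_n = {x ∈ ℝ^d : √d/n < |x − c_n| < 1 and x₁ < 2ⁿ}. Then for every τ > 3 there exist a constant c > 0 and N ∈ ℕ, depending only on d and τ, such that for every integer n ≥ N and every real μ ≥ 1, the function a_n(x) = n^d (μ χ_{C_n}(x) − χ_{D_n}(x)) satisfies ∫_{S_n} sup_{0 < t ≤ 1} (P_t * a_n)(x) dx ≥ c (μ − 1) ln n. -/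

import Mathlib

open MeasureTheory
open scoped ENNReal

noncomputable section

/-- `ℝ^d` as a Euclidean space. -/
abbrev Rd (d : ℕ) := EuclideanSpace ℝ (Fin d)

/-- The open cube `Q(c,r) = {y : max_i |c_i - y_i| < r}`. -/
def cubeSet {d : ℕ} (c : Rd d) (r : ℝ) : Set (Rd d) := {y | ∀ i, |c i - y i| < r}

/-- The first standard basis vector `e₁ = (1,0,…,0)`. -/
def e1 (d : ℕ) [NeZero d] : Rd d := EuclideanSpace.single 0 1

/-- The center `c_n = 2^n e₁`. -/
def cn (d : ℕ) [NeZero d] (n : ℕ) : Rd d := (2 : ℝ) ^ n • e1 d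

/-- The cube `C_n = Q(c_n, 1/(2n))`. -/
def Ck (d : ℕ) [NeZero d] (n : ℕ) : Set (Rd d) := cubeSet (cn d n) (1 / (2 * n))

/-- The shifted center `d_n = c_n + (τ/n) e₁`. -/
def dn (d : ℕ) [NeZero d] (τ : ℝ) (n : ℕ) : Rd d := cn d n + (τ / n) • e1 d

/-- The shifted cube `D_n = Q(d_n, 1/(2n))`. -/
def Dn (d : ℕ) [NeZero d] (τ : ℝ) (n : ℕ) : Set (Rd d) := cubeSet (dn d τ n) (1 / (2 * n))

/-- The Gauss–Weierstrass kernel `P_t(x) = (4πt)^{-d/2} exp(-|x|²/(4t))`. -/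
def gauss (d : ℕ) (t : ℝ) (x : Rd d) : ℝ :=
  (4 * Real.pi * t) ^ (-(d : ℝ) / 2) * Real.exp (-‖x‖ ^ 2 / (4 * t))

/-- The region `S_n = {x : √d/n < |x - c_n| < 1, x₁ < 2ⁿ}`. -/
def Sn (d : ℕ) [NeZero d] (n : ℕ) : Set (Rd d) :=
  {x | Real.sqrt d / n < ‖x - cn d n‖ ∧ ‖x - cn d n‖ < 1 ∧ x 0 < (2 : ℝ) ^ n}

/-- The function `a_n = n^d (μ χ_{C_n} - χ_{D_n})`. -/
def aFun (d : ℕ) [NeZero d] (τ : ℝ) (n : ℕ) (μ : ℝ) (x : Rd d) : ℝ :=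
  (n : ℝ) ^ d * (μ * (Ck d n).indicator (fun _ => (1 : ℝ)) x -
    (Dn d τ n).indicator (fun _ => (1 : ℝ)) x)

/-! If `x₁ < 2ⁿ`, every point of `D_n` is farther from `x` than the corresponding point of `C_n`,
so `(P_t * a_n)(x) ≥ (μ - 1) n^d ∫_{C_n} P_t(x - y) dy`. If moreover `√d/n ≤ ρ` and
`|x - c_n| < ρ`, the choice `t = ρ²` makes `P_t(x - y) ≳ ρ^{-d}` on `C_n`, so the maximal
function is `≳ (μ - 1) ρ^{-d}` there. The cubes `shell d n (2⁻ᵏ)`, of volume `≈ 2^{-kd}`, sit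
at distance `≈ 2⁻ᵏ` from `c_n` on the side `x₁ < 2ⁿ`; each contributes a constant to the
integral over `S_n`, they are pairwise disjoint, and `≈ log₂ n` of them lie in `S_n`. -/

open scoped RealInnerProductSpace

lemma smul_e1_apply {d : ℕ} [NeZero d] (a : ℝ) (i : Fin d) :
    (a • e1 d) i = if i = 0 then a else 0 := by
  simp [e1]

lemma cn_apply_zero (d : ℕ) [NeZero d] (n : ℕ) : cn d n 0 = 2 ^ n := by
  simp [cn, e1]

lemma norm_e1 (d : ℕ) [NeZero d] : ‖e1 d‖ = 1 := by
  simp [e1]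

lemma inner_e1 {d : ℕ} [NeZero d] (v : Rd d) : ⟪v, e1 d⟫ = v 0 := by
  simp [e1, EuclideanSpace.inner_single_right]

lemma norm_le_norm_sub_smul_e1 {d : ℕ} [NeZero d] {v : Rd d} {s : ℝ} (hs : 0 ≤ s)
    (hv : v 0 ≤ s / 2) : ‖v‖ ≤ ‖v - s • e1 d‖ := by
  have h : ‖v - s • e1 d‖ ^ 2 = ‖v‖ ^ 2 + s * (s - 2 * v 0) := by
    rw [norm_sub_sq_real, real_inner_smul_right, inner_e1, norm_smul, norm_e1,
      Real.norm_of_nonneg hs]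
    ring
  exact (pow_le_pow_iff_left₀ (norm_nonneg _) (norm_nonneg _) two_ne_zero).mp (by nlinarith)

lemma norm_sub_lt_of_mem_cubeSet {d : ℕ} [NeZero d] {c y : Rd d} {r : ℝ}
    (hy : y ∈ cubeSet c r) : ‖y - c‖ < Real.sqrt d * r := by
  have hr : 0 < r := (abs_nonneg _).trans_lt (hy 0)
  rw [EuclideanSpace.norm_eq, ← Real.sqrt_sq hr.le, ← Real.sqrt_mul (Nat.cast_nonneg d)]
  refine Real.sqrt_lt_sqrt (by positivity) ?_
  calc ∑ i, ‖(y - c) i‖ ^ 2 < ∑ _i : Fin d, r ^ 2 :=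
        Finset.sum_lt_sum_of_nonempty Finset.univ_nonempty fun i _ => by
          rw [Real.norm_eq_abs, sq_abs, PiLp.sub_apply, ← sq_abs, abs_sub_comm]
          exact pow_lt_pow_left₀ (hy i) (abs_nonneg _) two_ne_zero
    _ = d * r ^ 2 := by simp

lemma isOpen_cubeSet {d : ℕ} (c : Rd d) (r : ℝ) : IsOpen (cubeSet c r) := by
  simp only [cubeSet, Set.ofPred_forall]
  exact isOpen_iInter_of_finite fun i => isOpen_lt (by fun_prop) continuous_const

lemma measurableSet_cubeSet {d : ℕ} (c : Rd d) (r : ℝ) : MeasurableSet (cubeSet c r) :=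
  (isOpen_cubeSet c r).measurableSet

lemma volume_cubeSet {d : ℕ} (c : Rd d) {r : ℝ} (hr : 0 ≤ r) :
    volume (cubeSet c r) = ENNReal.ofReal ((2 * r) ^ d) := by
  have hpre : WithLp.toLp 2 ⁻¹' cubeSet c r = Set.univ.pi fun i => Set.Ioo (c i - r) (c i + r) := by
    ext y
    simp only [cubeSet, Set.mem_preimage, Set.mem_ofPred_eq, Set.mem_univ_pi, Set.mem_Ioo,
      abs_sub_lt_iff]
    exact forall_congr' fun i => by constructor <;> rintro ⟨h₁, h₂⟩ <;> constructor <;> linarith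
  rw [← (PiLp.volume_preserving_toLp (Fin d)).measure_preimage
    (measurableSet_cubeSet c r).nullMeasurableSet, hpre, volume_pi_pi]
  simp only [Real.volume_Ioo, add_sub_sub_cancel, ← two_mul, Finset.prod_const,
    Finset.card_univ, Fintype.card_fin, ENNReal.ofReal_pow (by positivity : (0:ℝ) ≤ 2 * r)]

lemma preimage_add_Dn (d : ℕ) [NeZero d] (τ : ℝ) (n : ℕ) :
    (· + (τ / n) • e1 d) ⁻¹' Dn d τ n = Ck d n := by
  ext y
  simp [Dn, Ck, dn, cubeSet]

section Gauss

variable {d : ℕ} {t : ℝ}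

lemma gauss_pos (ht : 0 < t) (x : Rd d) : 0 < gauss d t x := by
  unfold gauss; positivity

lemma continuous_gauss : Continuous (gauss d t) := by
  unfold gauss; fun_prop

lemma gauss_le_gauss_of_norm_le (ht : 0 < t) {x y : Rd d} (h : ‖x‖ ≤ ‖y‖) :
    gauss d t y ≤ gauss d t x := by
  unfold gauss
  gcongr

lemma rpow_mul_exp_le_gauss (ht : 0 < t) {a : ℝ} {x : Rd d} (h : ‖x‖ ^ 2 ≤ a * t) :
    (4 * Real.pi * t) ^ (-(d : ℝ) / 2) * Real.exp (-a / 4) ≤ gauss d t x := by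
  unfold gauss
  refine mul_le_mul_of_nonneg_left (Real.exp_le_exp.mpr ?_) (by positivity)
  rw [div_le_div_iff₀ (by norm_num) (by positivity)]
  linarith

lemma integrableOn_gauss_sub (ht : 0 < t) (x : Rd d) {s : Set (Rd d)} (hs : volume s ≠ ⊤) :
    IntegrableOn (fun y => gauss d t (x - y)) s := by
  refine Measure.integrableOn_of_bounded hs
    (continuous_gauss.comp (continuous_const.sub continuous_id)).aestronglyMeasurable
    (M := gauss d t 0) (ae_of_all _ fun y => ?_)
  rw [Real.norm_of_nonneg (gauss_pos ht _).le]
  exact gauss_le_gauss_of_norm_le ht (by simp)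

lemma integrableOn_cubeSet_gauss_sub (ht : 0 < t) (x c : Rd d) {r : ℝ} (hr : 0 ≤ r) :
    IntegrableOn (fun y => gauss d t (x - y)) (cubeSet c r) :=
  integrableOn_gauss_sub ht x (by rw [volume_cubeSet c hr]; exact ENNReal.ofReal_ne_top)

end Gauss

def heatConv (d : ℕ) (t : ℝ) (f : Rd d → ℝ) (x : Rd d) : ℝ :=
  ∫ y, gauss d t (x - y) * f y

section HeatConvolution

variable {d : ℕ} [NeZero d] {τ : ℝ} {n : ℕ} {μ t : ℝ}

lemma setIntegral_Dn (g : Rd d → ℝ) :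
    ∫ y in Dn d τ n, g y = ∫ y in Ck d n, g (y + (τ / n) • e1 d) := by
  rw [← preimage_add_Dn d τ n, (measurePreserving_add_right volume _).setIntegral_preimage_emb
    (measurableEmbedding_addRight _)]

lemma heatConv_aFun (ht : 0 < t) (x : Rd d) :
    heatConv d t (aFun d τ n μ) x = (n : ℝ) ^ d * (μ * (∫ y in Ck d n, gauss d t (x - y)) -
      ∫ y in Ck d n, gauss d t (x - (y + (τ / n) • e1 d))) := by
  set g := fun y => gauss d t (x - y)
  have hC : MeasurableSet (Ck d n) := measurableSet_cubeSet _ _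
  have hD : MeasurableSet (Dn d τ n) := measurableSet_cubeSet _ _
  have hint : ∀ c : Rd d, IntegrableOn g (cubeSet c (1 / (2 * n))) := fun c =>
    integrableOn_cubeSet_gauss_sub ht x c (by positivity)
  calc heatConv d t (aFun d τ n μ) x
      = ∫ y, (n : ℝ) ^ d * (μ * (Ck d n).indicator g y - (Dn d τ n).indicator g y) :=
        integral_congr_ae <| ae_of_all _ fun y => by
          simp only [aFun, Set.indicator]
          split_ifs <;> ring
    _ = (n : ℝ) ^ d * (μ * (∫ y in Ck d n, g y) - ∫ y in Dn d τ n, g y) := by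
        rw [integral_const_mul, integral_sub, integral_const_mul, integral_indicator hC,
          integral_indicator hD]
        · exact ((integrable_indicator_iff hC).mpr (hint _)).const_mul μ
        · exact (integrable_indicator_iff hD).mpr (hint _)
    _ = _ := by rw [setIntegral_Dn]

lemma gauss_sub_add_shift_le (hτ : 1 ≤ τ) (ht : 0 < t) {x y : Rd d} (hx : x 0 < 2 ^ n)
    (hy : y ∈ Ck d n) : gauss d t (x - (y + (τ / n) • e1 d)) ≤ gauss d t (x - y) := by
  refine gauss_le_gauss_of_norm_le ht ?_
  rw [← sub_sub]
  refine norm_le_norm_sub_smul_e1 (by positivity) ?_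
  have hy0 := (abs_lt.mp (hy 0)).2
  rw [cn_apply_zero] at hy0
  have : 1 / (2 * n) ≤ τ / n / 2 := by
    rw [div_div, mul_comm]; gcongr
  simp only [PiLp.sub_apply]
  linarith

lemma mul_integral_Ck_le_heatConv (hτ : 1 ≤ τ) (ht : 0 < t) {x : Rd d} (hx : x 0 < 2 ^ n) :
    (n : ℝ) ^ d * ((μ - 1) * ∫ y in Ck d n, gauss d t (x - y)) ≤
      heatConv d t (aFun d τ n μ) x := by
  have hshift : ∫ y in Ck d n, gauss d t (x - (y + (τ / n) • e1 d)) ≤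
      ∫ y in Ck d n, gauss d t (x - y) := by
    have hint : IntegrableOn (fun y => gauss d t (x - (τ / n) • e1 d - y)) (Ck d n) :=
      integrableOn_cubeSet_gauss_sub ht _ _ (by positivity)
    exact setIntegral_mono_on (by simpa only [sub_sub, add_comm] using hint)
      (integrableOn_cubeSet_gauss_sub ht x _ (by positivity)) (measurableSet_cubeSet _ _)
      fun y hy => gauss_sub_add_shift_le hτ ht hx hy
  rw [heatConv_aFun ht]
  calc (n : ℝ) ^ d * ((μ - 1) * ∫ y in Ck d n, gauss d t (x - y))
      = (n : ℝ) ^ d * (μ * (∫ y in Ck d n, gauss d t (x - y)) -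
          ∫ y in Ck d n, gauss d t (x - y)) := by ring
    _ ≤ _ := by gcongr

lemma volume_Ck (hn : 0 < n) : volume (Ck d n) = ENNReal.ofReal ((1 / n) ^ d) := by
  rw [Ck, volume_cubeSet _ (by positivity)]
  congr 2
  field_simp

lemma rpow_mul_exp_le_gauss_of_mem_Ck {ρ : ℝ} (hρ : 0 < ρ) (hρn : Real.sqrt d / n ≤ ρ)
    {x y : Rd d} (hx : ‖x - cn d n‖ < ρ) (hy : y ∈ Ck d n) :
    (4 * Real.pi * ρ ^ 2) ^ (-(d : ℝ) / 2) * Real.exp (-(9 / 16)) ≤ gauss d (ρ ^ 2) (x - y) := by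
  have hy' : ‖y - cn d n‖ < ρ / 2 := by
    calc ‖y - cn d n‖ < Real.sqrt d * (1 / (2 * n)) := norm_sub_lt_of_mem_cubeSet hy
      _ = Real.sqrt d / n / 2 := by ring
      _ ≤ ρ / 2 := by gcongr
  have hxy : ‖x - y‖ < 3 / 2 * ρ := by
    calc ‖x - y‖ = ‖(x - cn d n) - (y - cn d n)‖ := by rw [sub_sub_sub_cancel_right]
      _ ≤ ‖x - cn d n‖ + ‖y - cn d n‖ := norm_sub_le _ _
      _ < 3 / 2 * ρ := by linarith
  have h := rpow_mul_exp_le_gauss (t := ρ ^ 2) (a := 9 / 4) (x := x - y) (by positivity)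
    (by nlinarith [norm_nonneg (x - y)])
  rwa [show -(9 / 4 : ℝ) / 4 = -(9 / 16) by norm_num] at h

lemma rpow_mul_exp_le_heatConv (hτ : 1 ≤ τ) (hn : 0 < n) (hμ : 1 ≤ μ) {ρ : ℝ} (hρ : 0 < ρ)
    (hρn : Real.sqrt d / n ≤ ρ) {x : Rd d} (hxc : ‖x - cn d n‖ < ρ) (hx : x 0 < 2 ^ n) :
    (μ - 1) * ((4 * Real.pi * ρ ^ 2) ^ (-(d : ℝ) / 2) * Real.exp (-(9 / 16))) ≤
      heatConv d (ρ ^ 2) (aFun d τ n μ) x := by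
  set B := (4 * Real.pi * ρ ^ 2) ^ (-(d : ℝ) / 2) * Real.exp (-(9 / 16))
  have hC : (volume (Ck d n)).toReal = (1 / n) ^ d := by
    rw [volume_Ck hn, ENNReal.toReal_ofReal (by positivity)]
  have hB : (1 / n : ℝ) ^ d * B ≤ ∫ y in Ck d n, gauss d (ρ ^ 2) (x - y) := by
    rw [← hC, ← smul_eq_mul, ← measureReal_def, ← setIntegral_const]
    exact setIntegral_mono_on (integrableOn_const (by simp [volume_Ck hn]))
      (integrableOn_cubeSet_gauss_sub (by positivity) x _ (by positivity))
      (measurableSet_cubeSet _ _)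
      fun y hy => rpow_mul_exp_le_gauss_of_mem_Ck hρ hρn hxc hy
  have hn' : (n : ℝ) ^ d * (1 / n) ^ d = 1 := by
    rw [← mul_pow, mul_one_div_cancel (by positivity), one_pow]
  calc (μ - 1) * B = (n : ℝ) ^ d * ((μ - 1) * ((1 / n : ℝ) ^ d * B)) := by
        linear_combination (-(μ - 1) * B) * hn'
    _ ≤ (n : ℝ) ^ d * ((μ - 1) * ∫ y in Ck d n, gauss d (ρ ^ 2) (x - y)) := by
        gcongr
    _ ≤ _ := mul_integral_Ck_le_heatConv hτ (by positivity) hx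

end HeatConvolution

def shell (d : ℕ) [NeZero d] (n : ℕ) (ρ : ℝ) : Set (Rd d) :=
  cubeSet (cn d n - (3 / 4 * ρ) • e1 d) (ρ / (4 * d))

def shellBound (d : ℕ) : ℝ :=
  (4 * Real.pi) ^ (-(d : ℝ) / 2) * Real.exp (-(9 / 16)) / (2 * d) ^ d

lemma shellBound_eq {d : ℕ} {ρ : ℝ} (hρ : 0 < ρ) :
    (4 * Real.pi * ρ ^ 2) ^ (-(d : ℝ) / 2) * Real.exp (-(9 / 16)) * (ρ / (2 * d)) ^ d =
      shellBound d := by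
  have hρd : (ρ ^ 2) ^ (-(d : ℝ) / 2) * ρ ^ d = 1 := by
    rw [← Real.rpow_natCast ρ 2, ← Real.rpow_mul hρ.le, ← Real.rpow_natCast ρ d,
      ← Real.rpow_add hρ]
    convert Real.rpow_zero ρ using 2
    push_cast
    ring
  rw [Real.mul_rpow (by positivity) (by positivity), shellBound, div_pow]
  linear_combination ((4 * Real.pi) ^ (-(d : ℝ) / 2) * Real.exp (-(9 / 16)) / (2 * d) ^ d) * hρd

section Shells

variable {d : ℕ} [NeZero d] {τ : ℝ} {n : ℕ} {μ ρ : ℝ}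

lemma mem_shell {x : Rd d} (hx : x ∈ shell d n ρ) :
    ρ / 2 < ‖x - cn d n‖ ∧ ‖x - cn d n‖ < ρ ∧ x 0 < 2 ^ n := by
  have hd : (1 : ℝ) ≤ d := by exact_mod_cast Nat.one_le_iff_ne_zero.mpr (NeZero.ne d)
  have hρ : 0 < ρ := by
    have := (abs_nonneg _).trans_lt (hx 0)
    rwa [div_pos_iff_of_pos_right (by positivity)] at this
  have hr : ρ / (4 * d) ≤ ρ / 4 := by gcongr; linarith
  have hcc : ‖x - (cn d n - (3 / 4 * ρ) • e1 d)‖ < ρ / 4 :=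
    calc _ < Real.sqrt d * (ρ / (4 * d)) := norm_sub_lt_of_mem_cubeSet hx
      _ ≤ d * (ρ / (4 * d)) := by gcongr; exact Real.sqrt_le_self_iff.mpr (Or.inr hd)
      _ = ρ / 4 := by field_simp
  have hsplit : x - cn d n = (x - (cn d n - (3 / 4 * ρ) • e1 d)) - (3 / 4 * ρ) • e1 d := by abel
  have he : ‖(3 / 4 * ρ) • e1 d‖ = 3 / 4 * ρ := by
    rw [norm_smul, norm_e1, mul_one, Real.norm_of_nonneg (by positivity)]
  have h0 := (abs_lt.mp (hx 0)).1
  simp only [PiLp.sub_apply, cn_apply_zero, smul_e1_apply, ↓reduceIte] at h0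
  refine ⟨?_, ?_, by linarith⟩ <;> rw [hsplit]
  · linarith [norm_sub_norm_le ((3 / 4 * ρ) • e1 d) (x - (cn d n - (3 / 4 * ρ) • e1 d)),
      norm_sub_rev ((3 / 4 * ρ) • e1 d) (x - (cn d n - (3 / 4 * ρ) • e1 d))]
  · linarith [norm_sub_le (x - (cn d n - (3 / 4 * ρ) • e1 d)) ((3 / 4 * ρ) • e1 d)]

lemma disjoint_shell {ρ' : ℝ} (h : ρ' ≤ ρ / 2) : Disjoint (shell d n ρ) (shell d n ρ') :=
  Set.disjoint_left.mpr fun _ hx hx' => by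
    linarith [(mem_shell hx).1, (mem_shell hx').2.1]

open Function in
lemma pairwise_disjoint_shell_inv_two_pow :
    Pairwise (Disjoint on fun k : ℕ => shell d n (2⁻¹ ^ k)) := by
  intro j k hjk
  wlog h : j < k generalizing j k
  · exact (this hjk.symm (by omega)).symm
  refine disjoint_shell ?_
  calc (2⁻¹ : ℝ) ^ k ≤ 2⁻¹ ^ (j + 1) := pow_le_pow_of_le_one (by norm_num) (by norm_num) h
    _ = 2⁻¹ ^ j / 2 := by rw [pow_succ]; ring

lemma shell_subset_Sn (hρ : ρ ≤ 1) (hρn : Real.sqrt d / n ≤ ρ / 2) : shell d n ρ ⊆ Sn d n :=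
  fun _ hx => ⟨hρn.trans_lt (mem_shell hx).1, (mem_shell hx).2.1.trans_le hρ, (mem_shell hx).2.2⟩

lemma volume_shell (hρ : 0 ≤ ρ) : volume (shell d n ρ) = ENNReal.ofReal ((ρ / (2 * d)) ^ d) := by
  rw [shell, volume_cubeSet _ (by positivity)]
  congr 2
  field_simp
  ring

lemma shellBound_pos : 0 < shellBound d := by
  have : 0 < d := Nat.pos_of_ne_zero (NeZero.ne d)
  unfold shellBound; positivity

lemma ofReal_le_lintegral_shell (hτ : 1 ≤ τ) (hn : 0 < n) (hμ : 1 ≤ μ) (hρ : 0 < ρ)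
    (hρ1 : ρ ≤ 1) (hρn : Real.sqrt d / n ≤ ρ) :
    ENNReal.ofReal ((μ - 1) * shellBound d) ≤ ∫⁻ x in shell d n ρ,
      ⨆ t ∈ Set.Ioc (0 : ℝ) 1, ENNReal.ofReal (heatConv d t (aFun d τ n μ) x) := by
  set B := (4 * Real.pi * ρ ^ 2) ^ (-(d : ℝ) / 2) * Real.exp (-(9 / 16))
  have hpt : ∀ x ∈ shell d n ρ, ENNReal.ofReal ((μ - 1) * B) ≤
      ⨆ t ∈ Set.Ioc (0 : ℝ) 1, ENNReal.ofReal (heatConv d t (aFun d τ n μ) x) := fun x hx => by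
    have ht : ρ ^ 2 ∈ Set.Ioc (0 : ℝ) 1 := ⟨by positivity, pow_le_one₀ hρ.le hρ1⟩
    refine le_trans ?_ (le_biSup (fun t => ENNReal.ofReal (heatConv d t (aFun d τ n μ) x)) ht)
    exact ENNReal.ofReal_le_ofReal <| rpow_mul_exp_le_heatConv hτ hn hμ hρ hρn
      (mem_shell hx).2.1 (mem_shell hx).2.2
  calc ENNReal.ofReal ((μ - 1) * shellBound d)
      = ENNReal.ofReal ((μ - 1) * B) * volume (shell d n ρ) := by
        rw [volume_shell hρ.le, ← ENNReal.ofReal_mul (mul_nonneg (by linarith) (by positivity)),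
          ← shellBound_eq hρ, ← mul_assoc]
    _ = ∫⁻ _ in shell d n ρ, ENNReal.ofReal ((μ - 1) * B) := (setLIntegral_const _ _).symm
    _ ≤ _ := setLIntegral_mono' (measurableSet_cubeSet _ _) hpt

end Shells

lemma sqrt_le_two_pow (d : ℕ) : Real.sqrt d ≤ 2 ^ d := by
  rw [Real.sqrt_le_left (by positivity), ← pow_mul, pow_mul']
  exact_mod_cast (Nat.lt_two_pow_self).le.trans (Nat.pow_le_pow_left (by norm_num) d)

lemma sqrt_div_le_inv_two_pow {d n k : ℕ} (hk : k < Nat.log 2 n - d) :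
    Real.sqrt d / n ≤ 2⁻¹ ^ k / 2 := by
  have hn : 0 < n := Nat.pos_of_ne_zero fun h => by simp [h] at hk
  have h2k : (2 : ℝ) ^ (k + 1 + d) ≤ n := by
    exact_mod_cast (Nat.pow_le_pow_right two_pos (by omega)).trans (Nat.pow_log_le_self 2 hn.ne')
  calc Real.sqrt d / n ≤ 2 ^ d / 2 ^ (k + 1 + d) :=
        div_le_div₀ (by positivity) (sqrt_le_two_pow d) (by positivity) h2k
    _ = 2⁻¹ ^ k / 2 := by rw [pow_add, inv_pow, pow_succ]; field_simp

lemma div_mul_log_le {d n : ℕ} (hn : 2 ^ (2 * d + 1) ≤ n) {a : ℝ} (ha : 0 ≤ a) :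
    a / (2 * Real.log 2) * Real.log n ≤ (Nat.log 2 n - d : ℕ) * a := by
  have hL : 2 * d + 1 ≤ Nat.log 2 n := by
    simpa using Nat.log_mono_right (b := 2) hn
  have hlog : Real.log n < (Nat.log 2 n + 1 : ℕ) * Real.log 2 := by
    have hn0 : (0 : ℝ) < n := by exact_mod_cast (Nat.two_pow_pos _).trans_le hn
    rw [← Real.log_pow, Real.log_lt_log_iff hn0 (by positivity)]
    exact_mod_cast Nat.lt_pow_succ_log_self one_lt_two n
  have hcast : ((Nat.log 2 n + 1 : ℕ) : ℝ) ≤ 2 * (Nat.log 2 n - d : ℕ) := by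
    exact_mod_cast (by omega : Nat.log 2 n + 1 ≤ 2 * (Nat.log 2 n - d))
  have hlog2 := Real.log_pos one_lt_two
  have h : Real.log n ≤ 2 * Real.log 2 * (Nat.log 2 n - d : ℕ) := by nlinarith
  rw [div_mul_eq_mul_div, div_le_iff₀ (by positivity)]
  nlinarith [mul_le_mul_of_nonneg_left h ha]

theorem statement12_general (d : ℕ) [NeZero d] (τ : ℝ) (hτ : 3 < τ) :
    ∃ c > (0 : ℝ), ∃ N : ℕ, ∀ n : ℕ, N ≤ n → ∀ μ : ℝ, 1 ≤ μ →
      ENNReal.ofReal (c * (μ - 1) * Real.log n) ≤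
        ∫⁻ x in Sn d n, ⨆ t ∈ Set.Ioc (0 : ℝ) 1,
          ENNReal.ofReal (∫ y, gauss d t (x - y) * aFun d τ n μ y) := by
  refine ⟨shellBound d / (2 * Real.log 2), div_pos (shellBound_pos (d := d)) (by positivity),
    2 ^ (2 * d + 1), fun n hn μ hμ => ?_⟩
  set K := Nat.log 2 n - d
  have hn0 : 0 < n := (Nat.two_pow_pos _).trans_le hn
  have hρ : ∀ k ∈ Finset.range K, Real.sqrt d / n ≤ 2⁻¹ ^ k / 2 := fun k hk =>
    sqrt_div_le_inv_two_pow (Finset.mem_range.mp hk)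
  have hρ1 : ∀ k : ℕ, (2⁻¹ : ℝ) ^ k ≤ 1 := fun k => pow_le_one₀ (by norm_num) (by norm_num)
  calc ENNReal.ofReal (shellBound d / (2 * Real.log 2) * (μ - 1) * Real.log n)
      ≤ ∑ _k ∈ Finset.range K, ENNReal.ofReal ((μ - 1) * shellBound d) := by
        rw [Finset.sum_const, Finset.card_range, nsmul_eq_mul, ← ENNReal.ofReal_natCast,
          ← ENNReal.ofReal_mul (Nat.cast_nonneg K)]
        refine ENNReal.ofReal_le_ofReal ?_
        calc _ = (μ - 1) * shellBound d / (2 * Real.log 2) * Real.log n := by ring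
          _ ≤ _ := div_mul_log_le hn (mul_nonneg (by linarith) shellBound_pos.le)
    _ ≤ ∑ k ∈ Finset.range K, ∫⁻ x in shell d n (2⁻¹ ^ k), ⨆ t ∈ Set.Ioc (0 : ℝ) 1,
          ENNReal.ofReal (heatConv d t (aFun d τ n μ) x) :=
        Finset.sum_le_sum fun k hk => ofReal_le_lintegral_shell (by linarith) hn0 hμ
          (by positivity) (hρ1 k) ((hρ k hk).trans (half_le_self (by positivity)))
    _ = ∫⁻ x in ⋃ k ∈ Finset.range K, shell d n (2⁻¹ ^ k), ⨆ t ∈ Set.Ioc (0 : ℝ) 1,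
          ENNReal.ofReal (heatConv d t (aFun d τ n μ) x) :=
        (lintegral_biUnion_finset (pairwise_disjoint_shell_inv_two_pow.set_pairwise _)
          (fun k _ => measurableSet_cubeSet _ _) _).symm
    _ ≤ _ := lintegral_mono_set (Set.iUnion₂_subset fun k hk => shell_subset_Sn (hρ1 k) (hρ k hk))

/-- for every `τ > 3` there are `c > 0` and `N`, depending only on `d` and
`τ`, such that for every `n ≥ N` and every `μ ≥ 1`, with `a_n = n^d (μ χ_{C_n} - χ_{D_n})`,
`∫_{S_n} sup_{0 < t ≤ 1} (P_t * a_n)(x) dx ≥ c (μ-1) ln n`. -/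
theorem statement12 (d : ℕ) [NeZero d] (hd : 3 ≤ d) (τ : ℝ) (hτ : 3 < τ) :
    ∃ c > (0 : ℝ), ∃ N : ℕ, ∀ n : ℕ, N ≤ n → ∀ μ : ℝ, 1 ≤ μ →
      ENNReal.ofReal (c * (μ - 1) * Real.log n) ≤
        ∫⁻ x in Sn d n, ⨆ t ∈ Set.Ioc (0 : ℝ) 1,
          ENNReal.ofReal (∫ y, gauss d t (x - y) * aFun d τ n μ y) :=
  statement12_general d τ hτ
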